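/- arXiv:0812.1575 — 2 statements merged into one kernel-verified Lean document; each statement's English description precedes it below -/
import Mathlib

section
/- Let G be a group and f ∈ G. Then f is conjugate to f⁻¹ in G if and only if there exist g, h ∈ G with g² = h² and f = g⁻¹h. -/
/-!
If `c` conjugates `f` to `f⁻¹`, then `g = c` and `h = c * f` satisfy `g⁻¹ * h = f` and
`h² = c f c f = c f f⁻¹ c = g²`. Conversely, `g² = h²` says exactly that `h * g⁻¹ = h⁻¹ * g`,
so conjugation by `g` sends `g⁻¹ * h` to `h * g⁻¹ = (g⁻¹ * h)⁻¹`.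
-/

section

variable {G : Type*} [Group G]

theorem sq_eq_mul_sq_of_conj_eq_inv {c f : G} (hc : c * f * c⁻¹ = f⁻¹) :
    c ^ 2 = (c * f) ^ 2 := by
  have hcf : c * f = f⁻¹ * c := by rw [← hc]; group
  calc c ^ 2 = c * (f * f⁻¹) * c := by rw [mul_inv_cancel, mul_one, pow_two]
    _ = (c * f) ^ 2 := by rw [pow_two, ← mul_assoc, hcf]; group

theorem mul_inv_eq_inv_mul_of_sq_eq {g h : G} (hgh : g ^ 2 = h ^ 2) : h * g⁻¹ = h⁻¹ * g := by
  rw [mul_inv_eq_iff_eq_mul, mul_assoc, eq_inv_mul_iff_mul_eq, ← pow_two, ← pow_two, hgh]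

theorem isConj_inv_mul_of_sq_eq {g h : G} (hgh : g ^ 2 = h ^ 2) :
    IsConj (g⁻¹ * h) (g⁻¹ * h)⁻¹ :=
  isConj_iff.2 ⟨g, by rw [mul_inv_rev, inv_inv, ← mul_inv_eq_inv_mul_of_sq_eq hgh]; group⟩

end

theorem stmt_2 {G : Type*} [Group G] (f : G) :
    IsConj f f⁻¹ ↔ ∃ g h : G, g ^ 2 = h ^ 2 ∧ f = g⁻¹ * h := by
  constructor
  · intro hf
    obtain ⟨c, hc⟩ := isConj_iff.1 hf
    exact ⟨c, c * f, sq_eq_mul_sq_of_conj_eq_inv hc, by group⟩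
  · rintro ⟨g, h, hgh, rfl⟩
    exact isConj_inv_mul_of_sq_eq hgh
end

section
/- Let G be a group and f ∈ G. If g ∈ G reverses f and gⁿ = 1 with n odd, then g commutes with f, so f is reversed by the identity, and hence f² = 1. -/
theorem stmt_12 {G : Type*} [Group G] (f g : G) (hrev : g⁻¹ * f * g = f⁻¹)
    (hodd : Odd (orderOf g)) : f ^ 2 = 1 := by
  obtain ⟨k, hk⟩ := hodd
  have h2 : (g ^ 2)⁻¹ * f * (g ^ 2) = f := by
    have e : (g ^ 2)⁻¹ * f * (g ^ 2) = g⁻¹ * (g⁻¹ * f * g) * g := by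
      rw [pow_two, mul_inv_rev]
      simp [mul_assoc]
    rw [e, hrev, show g⁻¹ * f⁻¹ * g = (g⁻¹ * f * g)⁻¹ by group, hrev, inv_inv]
  have hcomm : Commute f (g ^ 2) := by
    have := h2
    rw [mul_assoc, inv_mul_eq_iff_eq_mul] at this
    exact this
  have hg : g = (g ^ 2) ^ (k + 1) := by
    have h1 : g ^ orderOf g = 1 := pow_orderOf_eq_one g
    rw [hk] at h1
    have e : (g ^ 2) ^ (k + 1) = g ^ (2 * k + 1) * g := by
      rw [← pow_mul, ← pow_succ]
      ring_nf
    rw [e, h1, one_mul]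
  have hcf : Commute f g := by
    rw [hg]
    exact hcomm.pow_right (k + 1)
  have hf : f⁻¹ = f := by
    rw [← hrev, mul_assoc, hcf.eq, ← mul_assoc, inv_mul_cancel, one_mul]
  rw [pow_two]
  nth_rewrite 1 [← hf]
  exact inv_mul_cancel f
end
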